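/- arXiv:2102.05854 — 4 statements merged into one kernel-verified Lean document; each statement's English description precedes it below -/
import Mathlib

section
/- Consider a finite set J of items assigned to k machines with capacities M_1,…,M_k (so J is partitioned as J = J_1 ∪ … ∪ J_k with Σ_{i∈J_j} s_j(i) ≤ M_j), and d global weight constraints Σ_{i∈J} w_q(i) ≤ W_q for q ∈ [d], where all sizes, weights and capacities are nonnegative reals, and each item has a nonnegative profit. Then for every ε with 0 < ε < 1, there exist subsets X, Y ⊆ J with |X| ≤ (d+k)/ε², p(Y) ≤ ε·p(J), and such that: for all j ∈ [k] and all i ∈ J_j ∖ (X ∪ Y), s_j(i) ≤ ε·(M_j − s_j(X ∩ J_j)); and for all q ∈ [d] and all i ∈ J ∖ (X ∪ Y), w_q(i) ≤ ε·(W_q − w_q(X)). -/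
/-!
Call an item big for X if, for some constraint it takes part in, its size exceeds ε times the
capacity left over after X. By averaging, each constraint has at most 1/ε big items outside X,
so adding all big items to X grows X by at most (d + k)/ε. Starting from X₀ = ∅ and adding the
big items ⌈1/ε⌉ times gives disjoint layers Xₜ₊₁ \ Xₜ of total profit at most p(J), so some layer
Y = Xₜ₊₁ \ Xₜ with t < 1/ε has profit at most ε p(J). With X = Xₜ every item outside X ∪ Y is
not big for X, and |X| ≤ t (d + k)/ε ≤ (d + k)/ε².
-/

open Finset

lemma card_filter_mul_lt_le_inv {α : Type*} {A : Finset α} {f : α → ℝ} {R ε : ℝ} (hε : 0 < ε)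
    (hf : ∀ i ∈ A, 0 ≤ f i) (hA : ∑ i ∈ A, f i ≤ R) :
    (#{i ∈ A | ε * R < f i} : ℝ) ≤ ε⁻¹ := by
  have hle_R : ∀ i ∈ A, f i ≤ R := fun i hi => (single_le_sum hf hi).trans hA
  rcases (le_trans (sum_nonneg hf) hA).eq_or_lt with rfl | hR
  · have hempty : {i ∈ A | ε * 0 < f i} = ∅ :=
      filter_eq_empty_iff.mpr fun i hi => by simpa using hle_R i hi
    rw [hempty, card_empty, Nat.cast_zero]
    exact (inv_pos.mpr hε).le
  have key : (#{i ∈ A | ε * R < f i} : ℝ) * (ε * R) ≤ R := by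
    calc (#{i ∈ A | ε * R < f i} : ℝ) * (ε * R)
        ≤ ∑ i ∈ A with ε * R < f i, f i := by
          simpa using card_nsmul_le_sum _ f _ fun i hi => (mem_filter.mp hi).2.le
      _ ≤ ∑ i ∈ A, f i := sum_le_sum_of_subset_of_nonneg (filter_subset _ _) fun i hi _ => hf i hi
      _ ≤ R := hA
  have hcard : (#{i ∈ A | ε * R < f i} : ℝ) * ε ≤ 1 :=
    le_of_mul_le_mul_right (by linarith) hR
  rwa [← le_div_iff₀ hε, one_div] at hcard

section Augment

variable {α : Type*} [DecidableEq α]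

def augmentSeq (B : Finset α → Finset α) : ℕ → Finset α
  | 0 => ∅
  | t + 1 => augmentSeq B t ∪ B (augmentSeq B t)

variable {B : Finset α → Finset α}

lemma augmentSeq_subset_succ (t : ℕ) : augmentSeq B t ⊆ augmentSeq B (t + 1) :=
  subset_union_left

lemma augmentSeq_subset {J : Finset α} (hB : ∀ X, B X ⊆ J) : ∀ t, augmentSeq B t ⊆ J
  | 0 => empty_subset J
  | t + 1 => union_subset (augmentSeq_subset hB t) (hB _)

lemma card_augmentSeq_le {N : ℝ} (hB : ∀ X, (#(B X) : ℝ) ≤ N) :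
    ∀ t : ℕ, (#(augmentSeq B t) : ℝ) ≤ t * N
  | 0 => by simp [augmentSeq]
  | t + 1 => by
    calc (#(augmentSeq B (t + 1)) : ℝ) ≤ #(augmentSeq B t) + #(B (augmentSeq B t)) := by
          exact_mod_cast card_union_le _ _
      _ ≤ t * N + N := add_le_add (card_augmentSeq_le hB t) (hB _)
      _ = (t + 1 : ℕ) * N := by push_cast; ring

lemma exists_lt_mul_sum_sdiff_le (X : ℕ → Finset α)
    (hX : ∀ t, X t ⊆ X (t + 1)) (h0 : X 0 = ∅) (p : α → ℝ) {T : ℕ} (hT : 0 < T) :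
    ∃ t < T, T * ∑ i ∈ X (t + 1) \ X t, p i ≤ ∑ i ∈ X T, p i := by
  have htelescope : ∑ t ∈ range T, ∑ i ∈ X (t + 1) \ X t, p i = ∑ i ∈ X T, p i := by
    simp_rw [sum_sdiff_eq_sub (hX _)]
    simp [sum_range_sub (fun t => ∑ i ∈ X t, p i), h0]
  obtain ⟨t, ht, hle⟩ := exists_le_of_sum_le (nonempty_range_iff.mpr hT.ne')
    (f := fun t => T * ∑ i ∈ X (t + 1) \ X t, p i) (g := fun _ => ∑ i ∈ X T, p i)
    (by simp [← mul_sum, htelescope])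
  exact ⟨t, mem_range.mp ht, hle⟩

end Augment

section KnapsackConstraints

variable {ι α : Type*} [Fintype ι] [DecidableEq α]
  (A : ι → Finset α) (f : ι → α → ℝ) (C : ι → ℝ)

/-- Constraint `c` reads `∑ i ∈ A c, f c i ≤ C c`; this is its capacity left over after `X`. -/
def residualCap (X : Finset α) (c : ι) : ℝ :=
  C c - ∑ i ∈ X ∩ A c, f c i

noncomputable def bigItems (ε : ℝ) (X : Finset α) : Finset α :=
  univ.biUnion fun c => {i ∈ A c \ X | ε * residualCap A f C X c < f c i}

variable {A f C}

lemma mem_bigItems {ε : ℝ} {X : Finset α} {c : ι} {i : α} (hi : i ∈ A c) (hiX : i ∉ X)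
    (hbig : ε * residualCap A f C X c < f c i) : i ∈ bigItems A f C ε X :=
  mem_biUnion.mpr ⟨c, mem_univ c, mem_filter.mpr ⟨mem_sdiff.mpr ⟨hi, hiX⟩, hbig⟩⟩

lemma bigItems_subset {J : Finset α} (hA : ∀ c, A c ⊆ J) (ε : ℝ) (X : Finset α) :
    bigItems A f C ε X ⊆ J :=
  biUnion_subset.mpr fun c _ => (filter_subset _ _).trans (sdiff_subset.trans (hA c))

lemma card_bigItems_le {ε : ℝ} (hε : 0 < ε) (hf : ∀ c, ∀ i ∈ A c, 0 ≤ f c i)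
    (hC : ∀ c, ∑ i ∈ A c, f c i ≤ C c) (X : Finset α) :
    (#(bigItems A f C ε X) : ℝ) ≤ Fintype.card ι / ε := by
  have hcount : ∀ c, (#{i ∈ A c \ X | ε * residualCap A f C X c < f c i} : ℝ) ≤ ε⁻¹ := by
    intro c
    refine card_filter_mul_lt_le_inv hε (fun i hi => hf c i (mem_sdiff.mp hi).1) ?_
    have hsplit := sum_inter_add_sum_sdiff (A c) X (f c)
    rw [inter_comm] at hsplit
    linarith [hC c, show residualCap A f C X c = C c - ∑ i ∈ X ∩ A c, f c i from rfl]
  calc (#(bigItems A f C ε X) : ℝ)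
      ≤ ∑ c, (#{i ∈ A c \ X | ε * residualCap A f C X c < f c i} : ℝ) := by
        exact_mod_cast card_biUnion_le
    _ ≤ ∑ _c : ι, ε⁻¹ := sum_le_sum fun c _ => hcount c
    _ = Fintype.card ι / ε := by simp [div_eq_mul_inv]

theorem exists_small_profit_sparse_decomposition {J : Finset α} {ε : ℝ} (hε : 0 < ε)
    (hA : ∀ c, A c ⊆ J) (hf : ∀ c, ∀ i ∈ A c, 0 ≤ f c i) (hC : ∀ c, ∑ i ∈ A c, f c i ≤ C c)
    (p : α → ℝ) (hp : ∀ i ∈ J, 0 ≤ p i) :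
    ∃ X Y : Finset α, X ⊆ J ∧ Y ⊆ J ∧ (#X : ℝ) ≤ Fintype.card ι / ε ^ 2 ∧
      ∑ i ∈ Y, p i ≤ ε * ∑ i ∈ J, p i ∧
      ∀ c, ∀ i ∈ A c \ (X ∪ Y), f c i ≤ ε * residualCap A f C X c := by
  set Xs := augmentSeq (bigItems A f C ε)
  have hXsJ := augmentSeq_subset (bigItems_subset (f := f) (C := C) hA ε)
  set T := ⌈ε⁻¹⌉₊
  obtain ⟨t, htT, hlayer⟩ := exists_lt_mul_sum_sdiff_le Xs augmentSeq_subset_succ rfl p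
    (Nat.ceil_pos.mpr (inv_pos.mpr hε))
  refine ⟨Xs t, Xs (t + 1) \ Xs t, hXsJ t, sdiff_subset.trans (hXsJ _), ?_, ?_, ?_⟩
  · have ht : (t : ℝ) ≤ ε⁻¹ := by
      have : ((t + 1 : ℕ) : ℝ) ≤ T := by exact_mod_cast htT
      push_cast at this
      linarith [Nat.ceil_lt_add_one (inv_pos.mpr hε).le]
    calc (#(Xs t) : ℝ) ≤ t * (Fintype.card ι / ε) :=
          card_augmentSeq_le (card_bigItems_le hε hf hC) t
      _ ≤ ε⁻¹ * (Fintype.card ι / ε) := by gcongr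
      _ = Fintype.card ι / ε ^ 2 := by field_simp
  · have hlayer_nonneg : 0 ≤ ∑ i ∈ Xs (t + 1) \ Xs t, p i :=
      sum_nonneg fun i hi => hp i (hXsJ _ (mem_sdiff.mp hi).1)
    have hXT : ∑ i ∈ Xs T, p i ≤ ∑ i ∈ J, p i :=
      sum_le_sum_of_subset_of_nonneg (hXsJ T) fun i hi _ => hp i hi
    have hεT : 1 ≤ ε * T := by
      have := Nat.le_ceil ε⁻¹
      rwa [inv_le_iff_one_le_mul₀' hε] at this
    nlinarith
  · intro c i hi
    obtain ⟨hiA, hiXY⟩ := mem_sdiff.mp hi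
    rw [union_sdiff_of_subset (augmentSeq_subset_succ t)] at hiXY
    have hiX : i ∉ Xs t := fun h => hiXY (augmentSeq_subset_succ t h)
    by_contra! hbig
    exact hiXY (mem_union_right _ (mem_bigItems hiA hiX hbig))

end KnapsackConstraints

theorem stmt5_general (k d : ℕ) (ε : ℝ) (hε : 0 < ε)
    (J : Finset ℕ) (Jm : Fin k → Finset ℕ)
    (hsub : ∀ j, Jm j ⊆ J)
    (s : Fin k → ℕ → ℝ) (w : Fin d → ℕ → ℝ) (p : ℕ → ℝ)
    (M : Fin k → ℝ) (W : Fin d → ℝ)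
    (hs : ∀ j i, 0 ≤ s j i) (hw : ∀ q i, 0 ≤ w q i) (hp : ∀ i, 0 ≤ p i)
    (hfeas : ∀ j, ∑ i ∈ Jm j, s j i ≤ M j)
    (hwfeas : ∀ q, ∑ i ∈ J, w q i ≤ W q) :
    ∃ X Y : Finset ℕ, X ⊆ J ∧ Y ⊆ J ∧
      ((X.card : ℝ) ≤ (d + k) / ε ^ 2) ∧
      (∑ i ∈ Y, p i ≤ ε * ∑ i ∈ J, p i) ∧
      (∀ j, ∀ i ∈ Jm j \ (X ∪ Y), s j i ≤ ε * (M j - ∑ i' ∈ X ∩ Jm j, s j i')) ∧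
      (∀ q, ∀ i ∈ J \ (X ∪ Y), w q i ≤ ε * (W q - ∑ i' ∈ X, w q i')) := by
  -- machines and global weight constraints are both knapsack constraints on subsets of `J`
  obtain ⟨X, Y, hXJ, hYJ, hcard, hprofit, hsmall⟩ :=
    exists_small_profit_sparse_decomposition (J := J) (A := Sum.elim Jm fun _ => J)
      (f := Sum.elim s w) (C := Sum.elim M W) hε
      (by rintro (j | q) <;> simp [hsub]) (by rintro (j | q) i _ <;> simp [hs, hw])
      (by rintro (j | q) <;> simp [hfeas, hwfeas]) p fun i _ => hp i
  refine ⟨X, Y, hXJ, hYJ, ?_, hprofit, fun j => hsmall (.inl j), fun q => ?_⟩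
  · simpa [add_comm] using hcard
  · simpa [residualCap, inter_eq_left.mpr hXJ] using hsmall (.inr q)

/-- Structural theorem for Vector-Max-GAP: any feasible assignment decomposes into a
constant-size set X, a low-profit set Y, and remaining items that are ε-small relative to
residual capacities. -/
theorem stmt5 (k d : ℕ) (ε : ℝ) (hε : 0 < ε) (hε1 : ε < 1)
    (J : Finset ℕ) (Jm : Fin k → Finset ℕ)
    (hpart : ∀ i ∈ J, ∃! j, i ∈ Jm j) (hsub : ∀ j, Jm j ⊆ J)
    (s : Fin k → ℕ → ℝ) (w : Fin d → ℕ → ℝ) (p : ℕ → ℝ)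
    (M : Fin k → ℝ) (W : Fin d → ℝ)
    (hs : ∀ j i, 0 ≤ s j i) (hw : ∀ q i, 0 ≤ w q i) (hp : ∀ i, 0 ≤ p i)
    (hM : ∀ j, 0 ≤ M j) (hW : ∀ q, 0 ≤ W q)
    (hfeas : ∀ j, ∑ i ∈ Jm j, s j i ≤ M j)
    (hwfeas : ∀ q, ∑ i ∈ J, w q i ≤ W q) :
    ∃ X Y : Finset ℕ, X ⊆ J ∧ Y ⊆ J ∧
      ((X.card : ℝ) ≤ (d + k) / ε ^ 2) ∧
      (∑ i ∈ Y, p i ≤ ε * ∑ i ∈ J, p i) ∧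
      (∀ j, ∀ i ∈ Jm j \ (X ∪ Y), s j i ≤ ε * (M j - ∑ i' ∈ X ∩ Jm j, s j i')) ∧
      (∀ q, ∀ i ∈ J \ (X ∪ Y), w q i ≤ ε * (W q - ∑ i' ∈ X, w q i')) :=
  stmt5_general k d ε hε J Jm hsub s w p M W hs hw hp hfeas hwfeas
end

section
/- Let W, H > 0 and 0 < ε < 1/2. Let S be a finite set of rectangles, each of width ≤ εW and height ≤ εH, with profits p : S → ℝ≥0. Sort S by nonincreasing profit density p(i)/area(i) and let T be the largest prefix with area(T) ≤ (1−ε)²·W·H. Then p(T) ≥ (1−2ε)·OPT, where OPT is the maximum profit of any subset of S whose rectangles can be packed interior-disjointly into the W × H bin. -/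
/-!
Interior-disjoint rectangles in the `W × H` bin have total area at most `W * H`, so every
packable set has area at most `W * H`. If `T ≠ S`, maximality of the prefix and the bound
`ε²WH` on a single item's area give `area(T) > (1 - 2ε)WH`. The density order makes the
minimal density `ρ` on `T` a threshold separating `T` from `S \ T`, and the usual
fractional-knapsack exchange against `ρ` then bounds `(1 - 2ε) p(S')` by `p(T)`.
-/

open MeasureTheory Set

lemma sum_mul_le_of_pairwise_interior_disjoint {ι : Type*} {W H : ℝ} (hW : 0 ≤ W) (hH : 0 ≤ H)
    {S : Finset ι} {w h x y : ι → ℝ} (hw : ∀ i ∈ S, 0 ≤ w i) (hh : ∀ i ∈ S, 0 ≤ h i)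
    (hin : ∀ i ∈ S, 0 ≤ x i ∧ x i + w i ≤ W ∧ 0 ≤ y i ∧ y i + h i ≤ H)
    (hdisj : ∀ i ∈ S, ∀ j ∈ S, i ≠ j → ∀ px py : ℝ,
      ¬(x i < px ∧ px < x i + w i ∧ y i < py ∧ py < y i + h i ∧
        x j < px ∧ px < x j + w j ∧ y j < py ∧ py < y j + h j)) :
    ∑ i ∈ S, w i * h i ≤ W * H := by
  let R : ι → Set (ℝ × ℝ) := fun i => Ioo (x i) (x i + w i) ×ˢ Ioo (y i) (y i + h i)
  have hR : (S : Set ι).PairwiseDisjoint R := by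
    intro i hi j hj hij
    rw [Function.onFun, Set.disjoint_left]
    rintro ⟨px, py⟩ ⟨⟨h1, h2⟩, h3, h4⟩ ⟨⟨h5, h6⟩, h7, h8⟩
    exact hdisj i hi j hj hij px py ⟨h1, h2, h3, h4, h5, h6, h7, h8⟩
  have hsub : ⋃ i ∈ S, R i ⊆ Icc 0 W ×ˢ Icc 0 H := by
    refine Set.iUnion₂_subset fun i hi => ?_
    obtain ⟨hx0, hxW, hy0, hyH⟩ := hin i hi
    exact Set.prod_mono (Ioo_subset_Icc_self.trans (Icc_subset_Icc hx0 hxW))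
      (Ioo_subset_Icc_self.trans (Icc_subset_Icc hy0 hyH))
  have hvol := measure_mono (μ := volume) hsub
  rw [measure_biUnion_finset hR fun i _ => measurableSet_Ioo.prod measurableSet_Ioo] at hvol
  simp only [R, Measure.volume_eq_prod, Measure.prod_prod, Real.volume_Ioo, Real.volume_Icc,
    add_sub_cancel_left, sub_zero, ← ENNReal.ofReal_mul hW] at hvol
  rw [Finset.sum_congr rfl fun i hi => (ENNReal.ofReal_mul (hw i hi)).symm,
    ← ENNReal.ofReal_sum_of_nonneg fun i hi => mul_nonneg (hw i hi) (hh i hi)] at hvol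
  exact (ENNReal.ofReal_le_ofReal_iff (mul_nonneg hW hH)).1 hvol

lemma exists_density_threshold {ι : Type*} {T : Finset ι} {p a : ι → ℝ} (hT : T.Nonempty)
    (ha : ∀ i ∈ T, 0 < a i) (hp : ∀ i ∈ T, 0 ≤ p i) :
    ∃ ρ, 0 ≤ ρ ∧ (∀ i ∈ T, ρ * a i ≤ p i) ∧
      ∀ j, (∀ i ∈ T, p j * a i ≤ p i * a j) → p j ≤ ρ * a j := by
  obtain ⟨i₀, hi₀, hmin⟩ := T.exists_min_image (fun i => p i / a i) hT
  refine ⟨p i₀ / a i₀, div_nonneg (hp i₀ hi₀) (ha i₀ hi₀).le,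
    fun i hi => (le_div_iff₀ (ha i hi)).1 (hmin i hi), fun j hj => ?_⟩
  rw [div_mul_eq_mul_div, le_div_iff₀ (ha i₀ hi₀)]
  exact hj i₀ hi₀

/-- The fractional-knapsack exchange argument, with `ρ` acting as an LP dual price. -/
lemma mul_sum_le_sum_of_density_threshold {ι : Type*} [DecidableEq ι] {S T : Finset ι}
    {p a : ι → ℝ} {ρ c : ℝ} (hρ : 0 ≤ ρ) (hc0 : 0 ≤ c) (hc1 : c ≤ 1)
    (hT : ∀ i ∈ T, ρ * a i ≤ p i) (hS : ∀ j ∈ S \ T, p j ≤ ρ * a j)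
    (harea : c * ∑ i ∈ S, a i ≤ ∑ i ∈ T, a i) :
    c * ∑ i ∈ S, p i ≤ ∑ i ∈ T, p i := by
  have hp_out : ∑ i ∈ S \ T, p i ≤ ρ * ∑ i ∈ S \ T, a i := by
    rw [Finset.mul_sum]; exact Finset.sum_le_sum hS
  have hp_in : ρ * ∑ i ∈ S ∩ T, a i ≤ ∑ i ∈ S ∩ T, p i := by
    rw [Finset.mul_sum]; exact Finset.sum_le_sum fun i hi => hT i (Finset.mem_inter.1 hi).2
  have hp_rest : ρ * ∑ i ∈ T \ S, a i ≤ ∑ i ∈ T \ S, p i := by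
    rw [Finset.mul_sum]; exact Finset.sum_le_sum fun i hi => hT i (Finset.mem_sdiff.1 hi).1
  rw [← Finset.sum_inter_add_sum_sdiff S T a] at harea
  rw [← Finset.sum_inter_add_sum_sdiff S T p, ← Finset.sum_inter_add_sum_sdiff T S p,
    Finset.inter_comm T S]
  rw [← Finset.sum_inter_add_sum_sdiff T S a, Finset.inter_comm T S] at harea
  nlinarith [mul_le_mul_of_nonneg_left hp_out hc0, mul_le_mul_of_nonneg_left harea hρ,
    mul_le_mul_of_nonneg_left hp_in (sub_nonneg.2 hc1)]

theorem stmt8_general (W H ε : ℝ) (hW : 0 < W) (hH : 0 < H) (hε : 0 < ε) (hε2 : ε < 1 / 2)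
    (S : Finset ℕ) (w h p : ℕ → ℝ)
    (hwh : ∀ i ∈ S, 0 < w i ∧ w i ≤ ε * W ∧ 0 < h i ∧ h i ≤ ε * H)
    (hp : ∀ i ∈ S, 0 ≤ p i)
    (T : Finset ℕ) (hTS : T ⊆ S)
    (hdens : ∀ i ∈ T, ∀ j ∈ S \ T, p j * (w i * h i) ≤ p i * (w j * h j))
    (hmax : T = S ∨ ∃ j ∈ S \ T,
        (1 - ε) ^ 2 * (W * H) < (∑ i ∈ T, w i * h i) + w j * h j) :
    ∀ S' ⊆ S,
      (∃ x y : ℕ → ℝ,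
        (∀ i ∈ S', 0 ≤ x i ∧ x i + w i ≤ W ∧ 0 ≤ y i ∧ y i + h i ≤ H) ∧
        (∀ i ∈ S', ∀ j ∈ S', i ≠ j → ∀ px py : ℝ,
          ¬(x i < px ∧ px < x i + w i ∧ y i < py ∧ py < y i + h i ∧
            x j < px ∧ px < x j + w j ∧ y j < py ∧ py < y j + h j))) →
      (1 - 2 * ε) * ∑ i ∈ S', p i ≤ ∑ i ∈ T, p i := by
  rintro S' hS' ⟨x, y, hin, hdisj⟩
  have hpS' : 0 ≤ ∑ i ∈ S', p i := Finset.sum_nonneg fun i hi => hp i (hS' hi)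
  have hareaS' : ∑ i ∈ S', w i * h i ≤ W * H :=
    sum_mul_le_of_pairwise_interior_disjoint hW.le hH.le (fun i hi => (hwh i (hS' hi)).1.le)
      (fun i hi => (hwh i (hS' hi)).2.2.1.le) hin hdisj
  rcases hmax with rfl | ⟨j, hj, hjT⟩
  · nlinarith [Finset.sum_le_sum_of_subset_of_nonneg hS' fun i hi _ => hp i hi]
  obtain ⟨hwj0, hwj, hhj0, hhj⟩ := hwh j (Finset.mem_sdiff.1 hj).1
  have hareaT : (1 - 2 * ε) * (W * H) < ∑ i ∈ T, w i * h i := by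
    nlinarith [mul_le_mul hwj hhj hhj0.le (by positivity)]
  have hpos : ∀ i ∈ T, 0 < w i * h i := fun i hi =>
    mul_pos (hwh i (hTS hi)).1 (hwh i (hTS hi)).2.2.1
  have hT : T.Nonempty := Finset.nonempty_iff_ne_empty.2 fun hT => by
    simp only [hT, Finset.sum_empty] at hareaT
    nlinarith [mul_pos hW hH]
  obtain ⟨ρ, hρ, hlow, hhigh⟩ := exists_density_threshold hT hpos fun i hi => hp i (hTS hi)
  refine mul_sum_le_sum_of_density_threshold hρ (by linarith) (by linarith) hlow
    (fun k hk => hhigh k fun i hi => hdens i hi k (Finset.sdiff_subset_sdiff hS' le_rfl hk)) ?_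
  nlinarith

/-- NFDH greedy density prefix: if T is a maximal prefix by nonincreasing profit density
with area ≤ (1-ε)²WH, then p(T) ≥ (1-2ε)·OPT over all packable subsets. -/
theorem stmt8 (W H ε : ℝ) (hW : 0 < W) (hH : 0 < H) (hε : 0 < ε) (hε2 : ε < 1 / 2)
    (S : Finset ℕ) (w h p : ℕ → ℝ)
    (hwh : ∀ i ∈ S, 0 < w i ∧ w i ≤ ε * W ∧ 0 < h i ∧ h i ≤ ε * H)
    (hp : ∀ i ∈ S, 0 ≤ p i)
    (T : Finset ℕ) (hTS : T ⊆ S)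
    (hdens : ∀ i ∈ T, ∀ j ∈ S \ T, p j * (w i * h i) ≤ p i * (w j * h j))
    (harea : ∑ i ∈ T, w i * h i ≤ (1 - ε) ^ 2 * (W * H))
    (hmax : T = S ∨ ∃ j ∈ S \ T,
        (1 - ε) ^ 2 * (W * H) < (∑ i ∈ T, w i * h i) + w j * h j) :
    ∀ S' ⊆ S,
      (∃ x y : ℕ → ℝ,
        (∀ i ∈ S', 0 ≤ x i ∧ x i + w i ≤ W ∧ 0 ≤ y i ∧ y i + h i ≤ H) ∧
        (∀ i ∈ S', ∀ j ∈ S', i ≠ j → ∀ px py : ℝ,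
          ¬(x i < px ∧ px < x i + w i ∧ y i < py ∧ py < y i + h i ∧
            x j < px ∧ px < x j + w j ∧ y j < py ∧ py < y j + h j))) →
      (1 - 2 * ε) * ∑ i ∈ S', p i ≤ ∑ i ∈ T, p i :=
  stmt8_general W H ε hW hH hε hε2 S w h p hwh hp T hTS hdens hmax
end

section
/- Let J be a finite set of ε-small items feasible for the resource-augmented Vector-Max-GAP instance: J is partitioned into J_1,…,J_k with Σ_{i∈J_j} s_j(i) ≤ (1+ε)M_j for each machine j, and Σ_{i∈J} w_q(i) ≤ (1+ε)W_q for each q ∈ [d], where every item i ∈ J_j satisfies s_j(i) ≤ ε·M_j and w_q(i) ≤ ε·W_q for all q. Then, assuming 2ε(d+1) ≤ 1 and 0 < ε ≤ 1/2, there exists J' ⊆ J with p(J') ≥ (1 − 2(d+1)ε)·p(J) such that J' (with the induced machine assignment) satisfies Σ_{i∈J'∩J_j} s_j(i) ≤ M_j for all j and Σ_{i∈J'} w_q(i) ≤ W_q for all q. -/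
/-!
A single overflowing capacity constraint `∑ s ≤ (1 + ε) M` is repaired by deleting the items of
lowest profit density `p / s` until the overflow, at most `ε M`, is absorbed. As every item has
size at most `ε M`, the deleted set has size at most `2 ε M`, out of a total exceeding `M`; being
of below-average density, it carries at most a `2 ε` fraction of the profit. Repairing every
machine at once (their item sets are disjoint) and then each of the `d` weight constraints in
turn loses at most `2 ε p(J)` per round, hence at most `2 (d + 1) ε p(J)` in total.
-/

open Finset Function

variable {ι : Type*}

section Density

variable {s p : ι → ℝ}

theorem exists_min_density (hs : ∀ i, 0 ≤ s i) (hp : ∀ i, 0 ≤ p i) {A : Finset ι}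
    (hA : ∃ i ∈ A, 0 < s i) : ∃ i ∈ A, 0 < s i ∧ ∀ j ∈ A, p i * s j ≤ s i * p j := by
  obtain ⟨i, hi, hmin⟩ := exists_min_image {j ∈ A | 0 < s j} (fun j => p j / s j)
    (by simpa [Finset.Nonempty] using hA)
  rw [mem_filter] at hi
  refine ⟨i, hi.1, hi.2, fun j hj => ?_⟩
  rcases (hs j).eq_or_lt with hsj | hsj
  · rw [← hsj, mul_zero]
    exact mul_nonneg (hs i) (hp j)
  · have := hmin j (mem_filter.2 ⟨hj, hsj⟩)
    rw [div_le_div_iff₀ hi.2 hsj] at this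
    linarith

variable [DecidableEq ι]

theorem exists_low_density_subset (hs : ∀ i, 0 ≤ s i) (hp : ∀ i, 0 ≤ p i) (c : ℝ)
    (A : Finset ι) (hc : ∀ i ∈ A, s i ≤ c) (t : ℝ) (ht : 0 < t) (htA : t ≤ ∑ i ∈ A, s i) :
    ∃ R ⊆ A, t ≤ ∑ i ∈ R, s i ∧ ∑ i ∈ R, s i ≤ t + c ∧
      ∀ j ∈ A \ R, (∑ i ∈ R, p i) * s j ≤ (∑ i ∈ R, s i) * p j := by
  induction A using Finset.strongInduction generalizing t with
  | H A ih =>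
  obtain ⟨i, hiA, hsi, hmin⟩ := exists_min_density hs hp
    (exists_lt_of_sum_lt (by simpa using ht.trans_le htA) : ∃ i ∈ A, (0 : ℝ) < s i)
  by_cases hti : t ≤ s i
  · refine ⟨{i}, singleton_subset_iff.2 hiA, by simpa using hti, ?_, ?_⟩
    · simpa using (hc i hiA).trans (le_add_of_nonneg_left ht.le)
    · simpa using fun j hj _ => hmin j hj
  have hsum := sum_erase_add A s hiA
  obtain ⟨R, hRA, htR, hRt, hR⟩ := ih (A.erase i) (erase_ssubset hiA)
    (fun j hj => hc j (mem_of_mem_erase hj)) (t - s i) (by linarith) (by linarith)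
  have hiR : i ∉ R := fun h => by simpa using hRA h
  refine ⟨insert i R, insert_subset hiA (hRA.trans (erase_subset i A)), ?_, ?_, ?_⟩
  · rw [sum_insert hiR]; linarith
  · rw [sum_insert hiR]; linarith
  · intro j hj
    simp only [mem_sdiff, mem_insert, not_or] at hj
    have := hR j (by simp [hj.1, hj.2.1, hj.2.2])
    rw [sum_insert hiR, sum_insert hiR]
    linarith [hmin j hj.1]

theorem sum_mul_sum_le_of_low_density {R A : Finset ι} (hRA : R ⊆ A)
    (hR : ∀ j ∈ A \ R, (∑ i ∈ R, p i) * s j ≤ (∑ i ∈ R, s i) * p j) :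
    (∑ i ∈ R, p i) * ∑ i ∈ A, s i ≤ (∑ i ∈ R, s i) * ∑ i ∈ A, p i := by
  rw [← sum_sdiff hRA (f := s), ← sum_sdiff hRA (f := p), mul_add, mul_add,
    mul_comm (∑ i ∈ R, p i) (∑ i ∈ R, s i)]
  gcongr ?_ + _
  rw [mul_sum, mul_sum]
  exact sum_le_sum hR

end Density

section Trim

variable [DecidableEq ι] {ε : ℝ}

theorem exists_trim_one {s p : ι → ℝ} {M : ℝ} (hε : 0 ≤ ε) (hs : ∀ i, 0 ≤ s i)
    (hp : ∀ i, 0 ≤ p i) (A : Finset ι) (hsmall : ∀ i ∈ A, s i ≤ ε * M)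
    (hcap : ∑ i ∈ A, s i ≤ (1 + ε) * M) :
    ∃ R ⊆ A, ∑ i ∈ A \ R, s i ≤ M ∧ ∑ i ∈ R, p i ≤ 2 * ε * ∑ i ∈ A, p i := by
  by_cases hA : ∑ i ∈ A, s i ≤ M
  · exact ⟨∅, empty_subset A, by simpa using hA,
      by simpa using mul_nonneg (mul_nonneg zero_le_two hε) (sum_nonneg fun i _ => hp i)⟩
  rw [not_le] at hA
  have hM : 0 ≤ M := nonneg_of_mul_nonneg_right
    ((sum_nonneg fun i _ => hs i).trans hcap) (by linarith)
  obtain ⟨R, hRA, htR, hRt, hR⟩ := exists_low_density_subset hs hp (ε * M) A hsmall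
    (∑ i ∈ A, s i - M) (by linarith) (by linarith)
  refine ⟨R, hRA, by linarith [sum_sdiff hRA (f := s)], le_of_mul_le_mul_right ?_ (hM.trans_lt hA)⟩
  calc (∑ i ∈ R, p i) * ∑ i ∈ A, s i ≤ (∑ i ∈ R, s i) * ∑ i ∈ A, p i :=
        sum_mul_sum_le_of_low_density hRA hR
    _ ≤ 2 * ε * M * ∑ i ∈ A, p i := by
        gcongr
        · exact sum_nonneg fun i _ => hp i
        · linarith
    _ ≤ 2 * ε * (∑ i ∈ A, p i) * ∑ i ∈ A, s i := by
        rw [mul_right_comm]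
        gcongr
        exact mul_nonneg (mul_nonneg zero_le_two hε) (sum_nonneg fun i _ => hp i)

theorem exists_trim_finset {κ : Type*} {w : κ → ι → ℝ} {W : κ → ℝ} {p : ι → ℝ}
    (hε : 0 ≤ ε) (hw : ∀ q i, 0 ≤ w q i) (hp : ∀ i, 0 ≤ p i) (Q : Finset κ) (A : Finset ι)
    (hsmall : ∀ q ∈ Q, ∀ i ∈ A, w q i ≤ ε * W q)
    (hcap : ∀ q ∈ Q, ∑ i ∈ A, w q i ≤ (1 + ε) * W q) :
    ∃ B ⊆ A, (∀ q ∈ Q, ∑ i ∈ B, w q i ≤ W q) ∧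
      ∑ i ∈ A, p i ≤ ∑ i ∈ B, p i + 2 * ε * #Q * ∑ i ∈ A, p i := by
  classical
  induction Q using Finset.induction with
  | empty => exact ⟨A, Subset.rfl, by simp, by simp⟩
  | @insert q Q hq ih =>
  obtain ⟨B, hBA, hBQ, hBp⟩ := ih (fun q' hq' => hsmall q' (mem_insert_of_mem hq'))
    (fun q' hq' => hcap q' (mem_insert_of_mem hq'))
  have hmono : ∀ q', ∀ C ⊆ A, ∑ i ∈ C, w q' i ≤ ∑ i ∈ A, w q' i := fun q' C hC =>
    sum_le_sum_of_subset_of_nonneg hC fun i _ _ => hw q' i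
  obtain ⟨R, hRB, hRq, hRp⟩ := exists_trim_one hε (hw q) hp B
    (fun i hi => hsmall q (mem_insert_self q Q) i (hBA hi))
    ((hmono q B hBA).trans (hcap q (mem_insert_self q Q)))
  refine ⟨B \ R, sdiff_subset.trans hBA, ?_, ?_⟩
  · simp only [mem_insert, forall_eq_or_imp]
    exact ⟨hRq, fun q' hq' => (sum_le_sum_of_subset_of_nonneg sdiff_subset
      fun i _ _ => hw q' i).trans (hBQ q' hq')⟩
  · have hBp' : 2 * ε * ∑ i ∈ B, p i ≤ 2 * ε * ∑ i ∈ A, p i :=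
      mul_le_mul_of_nonneg_left (sum_le_sum_of_subset_of_nonneg hBA fun i _ _ => hp i)
        (mul_nonneg zero_le_two hε)
    rw [card_insert_of_notMem hq, Nat.cast_succ]
    linarith [sum_sdiff hRB (f := p)]

theorem exists_trim_machines {κ : Type*} [Fintype κ] {s : κ → ι → ℝ} {M : κ → ℝ}
    {p : ι → ℝ} (hε : 0 ≤ ε) (hs : ∀ j i, 0 ≤ s j i) (hp : ∀ i, 0 ≤ p i) (J : Finset ι)
    (Jm : κ → Finset ι) (hdisj : Pairwise (Disjoint on Jm)) (hsub : ∀ j, Jm j ⊆ J)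
    (hsmall : ∀ j, ∀ i ∈ Jm j, s j i ≤ ε * M j)
    (hcap : ∀ j, ∑ i ∈ Jm j, s j i ≤ (1 + ε) * M j) :
    ∃ J₀ ⊆ J, (∀ j, ∑ i ∈ J₀ ∩ Jm j, s j i ≤ M j) ∧
      ∑ i ∈ J, p i ≤ ∑ i ∈ J₀, p i + 2 * ε * ∑ i ∈ J, p i := by
  choose R hRJm hRcap hRp using fun j => exists_trim_one hε (hs j) hp (Jm j) (hsmall j) (hcap j)
  have hdisjR : (↑(univ : Finset κ) : Set κ).PairwiseDisjoint R := fun a _ b _ hab =>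
    (hdisj hab).mono (hRJm a) (hRJm b)
  have hRJ : univ.biUnion R ⊆ J := biUnion_subset.2 fun j _ => (hRJm j).trans (hsub j)
  refine ⟨J \ univ.biUnion R, sdiff_subset, fun j => ?_, ?_⟩
  · refine (sum_le_sum_of_subset_of_nonneg ?_ fun i _ _ => hs j i).trans (hRcap j)
    intro i hi
    simp only [mem_inter, mem_sdiff, mem_biUnion, mem_univ, true_and, not_exists] at hi
    exact mem_sdiff.2 ⟨hi.2, hi.1.2 j⟩
  · calc ∑ i ∈ J, p i = ∑ i ∈ J \ univ.biUnion R, p i + ∑ j, ∑ i ∈ R j, p i := by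
          rw [← sum_biUnion hdisjR, sum_sdiff hRJ]
      _ ≤ ∑ i ∈ J \ univ.biUnion R, p i + ∑ j, 2 * ε * ∑ i ∈ Jm j, p i := by
          gcongr with j; exact hRp j
      _ ≤ ∑ i ∈ J \ univ.biUnion R, p i + 2 * ε * ∑ i ∈ J, p i := by
          rw [← mul_sum, ← sum_biUnion (hdisj.set_pairwise _)]
          gcongr
          · exact fun i _ _ => hp i
          · exact biUnion_subset.2 fun j _ => hsub j

end Trim

theorem stmt12_general (k d : ℕ) (ε : ℝ) (hε : 0 < ε)
    (J : Finset ℕ) (Jm : Fin k → Finset ℕ)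
    (hpart : ∀ i ∈ J, ∃! j, i ∈ Jm j) (hsub : ∀ j, Jm j ⊆ J)
    (s : Fin k → ℕ → ℝ) (w : Fin d → ℕ → ℝ) (p : ℕ → ℝ)
    (M : Fin k → ℝ) (W : Fin d → ℝ)
    (hs : ∀ j i, 0 ≤ s j i) (hw : ∀ q i, 0 ≤ w q i) (hp : ∀ i, 0 ≤ p i)
    (hsmall_s : ∀ j, ∀ i ∈ Jm j, s j i ≤ ε * M j)
    (hsmall_w : ∀ q, ∀ i ∈ J, w q i ≤ ε * W q)
    (hfeas : ∀ j, ∑ i ∈ Jm j, s j i ≤ (1 + ε) * M j)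
    (hwfeas : ∀ q, ∑ i ∈ J, w q i ≤ (1 + ε) * W q) :
    ∃ J' ⊆ J, (1 - 2 * ((d : ℝ) + 1) * ε) * (∑ i ∈ J, p i) ≤ (∑ i ∈ J', p i) ∧
      (∀ j, ∑ i ∈ J' ∩ Jm j, s j i ≤ M j) ∧
      (∀ q, ∑ i ∈ J', w q i ≤ W q) := by
  have hdisj : Pairwise (Disjoint on Jm) := fun a b hab =>
    disjoint_left.2 fun i hia hib => hab ((hpart i (hsub a hia)).unique hia hib)
  obtain ⟨J₀, hJ₀J, hJ₀s, hJ₀p⟩ :=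
    exists_trim_machines hε.le hs hp J Jm hdisj hsub hsmall_s hfeas
  obtain ⟨B, hBJ₀, hBw, hBp⟩ := exists_trim_finset hε.le hw hp univ J₀
    (fun q _ i hi => hsmall_w q i (hJ₀J hi))
    (fun q _ => (sum_le_sum_of_subset_of_nonneg hJ₀J fun i _ _ => hw q i).trans (hwfeas q))
  refine ⟨B, hBJ₀.trans hJ₀J, ?_, fun j => ?_, fun q => hBw q (mem_univ q)⟩
  · have hJ₀J' : 2 * ε * d * ∑ i ∈ J₀, p i ≤ 2 * ε * d * ∑ i ∈ J, p i :=
      mul_le_mul_of_nonneg_left (sum_le_sum_of_subset_of_nonneg hJ₀J fun i _ _ => hp i)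
        (by positivity)
    rw [card_univ, Fintype.card_fin] at hBp
    linarith
  · exact (sum_le_sum_of_subset_of_nonneg (inter_subset_inter_right hBJ₀)
      fun i _ _ => hs j i).trans (hJ₀s j)

/-- Trimming a resource-augmented assignment of ε-small items for Vector-Max-GAP yields a
feasible assignment losing at most a 2(d+1)ε fraction of profit. -/
theorem stmt12 (k d : ℕ) (ε : ℝ) (hε : 0 < ε) (hε2 : ε ≤ 1 / 2)
    (hεd : 2 * ε * ((d : ℝ) + 1) ≤ 1)
    (J : Finset ℕ) (Jm : Fin k → Finset ℕ)
    (hpart : ∀ i ∈ J, ∃! j, i ∈ Jm j) (hsub : ∀ j, Jm j ⊆ J)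
    (s : Fin k → ℕ → ℝ) (w : Fin d → ℕ → ℝ) (p : ℕ → ℝ)
    (M : Fin k → ℝ) (W : Fin d → ℝ)
    (hs : ∀ j i, 0 ≤ s j i) (hw : ∀ q i, 0 ≤ w q i) (hp : ∀ i, 0 ≤ p i)
    (hM : ∀ j, 0 ≤ M j) (hW : ∀ q, 0 ≤ W q)
    (hsmall_s : ∀ j, ∀ i ∈ Jm j, s j i ≤ ε * M j)
    (hsmall_w : ∀ q, ∀ i ∈ J, w q i ≤ ε * W q)
    (hfeas : ∀ j, ∑ i ∈ Jm j, s j i ≤ (1 + ε) * M j)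
    (hwfeas : ∀ q, ∑ i ∈ J, w q i ≤ (1 + ε) * W q) :
    ∃ J' ⊆ J, (1 - 2 * ((d : ℝ) + 1) * ε) * (∑ i ∈ J, p i) ≤ (∑ i ∈ J', p i) ∧
      (∀ j, ∑ i ∈ J' ∩ Jm j, s j i ≤ M j) ∧
      (∀ q, ∑ i ∈ J', w q i ≤ W q) :=
  stmt12_general k d ε hε J Jm hpart hsub s w p M W hs hw hp hsmall_s hsmall_w hfeas hwfeas
end

section
/- Let W, H > 0 and let S be a finite set of rectangles with widths w(i) ≤ w and heights h(i) ≤ h for all i, where w < W and h < H. If Σ_{i∈S} w(i)·h(i) ≤ (W − w)(H − h), then NFDH (Next Fit Decreasing Height) packs all rectangles of S interior-disjointly and axis-parallel into the W × H bin. -/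
/-!
NFDH places the items, in order of nonincreasing height, on shelves, and closes a shelf only when
the next item does not fit on it. A closed shelf is therefore filled to width more than `W - w`
with items at least as tall as the shelf opened after it, so the area packed on it is at least
`(W - w)` times the height of the next shelf. Summing, all shelves but the first have total height
at most `area / (W - w) ≤ H - h`, and the first one has height at most `h`.
-/

theorem List.exists_perm_pairwise_antitone {α β : Type*} [LinearOrder β] (f : α → β)
    (l : List α) : ∃ l' : List α, l'.Perm l ∧ l'.Pairwise fun a b => f b ≤ f a := by
  refine ⟨l.mergeSort fun a b => decide (f b ≤ f a), List.mergeSort_perm _ _, ?_⟩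
  simpa using List.pairwise_mergeSort (le := fun a b => decide (f b ≤ f a))
    (fun a b c hab hbc => by simp only [decide_eq_true_iff] at *; exact hbc.trans hab)
    (fun a b => by simpa using le_total (f b) (f a)) l

theorem List.Pairwise.rel_or_rel_of_ne {α : Type*} {R : α → α → Prop} {l : List α}
    (hl : l.Pairwise R) {a b : α} (ha : a ∈ l) (hb : b ∈ l) (hab : a ≠ b) : R a b ∨ R b a :=
  have : Std.Symm fun x y => R x y ∨ R y x := ⟨fun _ _ => Or.symm⟩
  (hl.imp Or.inl : l.Pairwise fun x y => R x y ∨ R y x).forall ha hb hab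

namespace NFDH

/-- Item `item` placed with its lower left corner at `(x, y)`. -/
structure Placement where
  item : ℕ
  x : ℝ
  y : ℝ

section

variable (wi hi : ℕ → ℝ) (W : ℝ)

/-- Next-fit shelf packing of a list of items, starting on a shelf of height `s` at level `y`
that is already filled up to `x`. -/
noncomputable def nextFit : List ℕ → ℝ → ℝ → ℝ → List Placement
  | [], _, _, _ => []
  | i :: t, x, y, s =>
    if x + wi i ≤ W then ⟨i, x, y⟩ :: nextFit t (x + wi i) y s
    else ⟨i, 0, y + s⟩ :: nextFit t (wi i) (y + s) (hi i)

noncomputable def openedHeight : List ℕ → ℝ → ℝ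
  | [], _ => 0
  | i :: t, x =>
    if x + wi i ≤ W then openedHeight t (x + wi i) else hi i + openedHeight t (wi i)

/-- Next Fit Decreasing Height on a list already sorted by nonincreasing height: the first shelf
is as tall as the first item. -/
noncomputable def nfdh : List ℕ → List Placement
  | [] => []
  | i :: t => nextFit wi hi W (i :: t) 0 0 (hi i)

def Separated (p q : Placement) : Prop :=
  p.x + wi p.item ≤ q.x ∨ p.y + hi p.item ≤ q.y

end

variable {wi hi : ℕ → ℝ} {W : ℝ}

theorem map_item_nextFit (L : List ℕ) (x y s : ℝ) :
    (nextFit wi hi W L x y s).map Placement.item = L := by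
  induction L generalizing x y s with
  | nil => rfl
  | cons i t ih => simp only [nextFit]; split_ifs <;> simp [ih]

theorem openedHeight_nonneg {L : List ℕ} (hh : ∀ i ∈ L, 0 ≤ hi i) (x : ℝ) :
    0 ≤ openedHeight wi hi W L x := by
  induction L generalizing x with
  | nil => simp [openedHeight]
  | cons i t ih =>
    have ht := ih fun j hj => hh j (List.mem_cons_of_mem _ hj)
    simp only [openedHeight]
    split_ifs
    · exact ht _
    · exact add_nonneg (hh i List.mem_cons_self) (ht _)

/-- `x * c` stands for the area of the current shelf, filled up to `x` with items at least as tall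
as `c`. -/
theorem mul_openedHeight_le {w c x : ℝ} {L : List ℕ} (hsort : L.Pairwise fun a b => hi b ≤ hi a)
    (hw : ∀ i ∈ L, 0 ≤ wi i ∧ wi i ≤ w) (hh : ∀ i ∈ L, 0 ≤ hi i) (hhc : ∀ i ∈ L, hi i ≤ c)
    (hc : 0 ≤ c) (hx : 0 ≤ x) :
    (W - w) * openedHeight wi hi W L x ≤ x * c + (L.map fun i => wi i * hi i).sum := by
  induction L generalizing x c with
  | nil => simpa [openedHeight] using mul_nonneg hx hc
  | cons i t ih =>
    obtain ⟨⟨hwi, hwi_le⟩, hw⟩ := List.forall_mem_cons.1 hw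
    obtain ⟨hhi, hh⟩ := List.forall_mem_cons.1 hh
    obtain ⟨hle, hsort⟩ := List.pairwise_cons.1 hsort
    have hic : x * hi i ≤ x * c := mul_le_mul_of_nonneg_left (hhc i List.mem_cons_self) hx
    simp only [openedHeight, List.map_cons, List.sum_cons]
    split_ifs with hfit
    · nlinarith [ih hsort hw hh hle hhi (add_nonneg hx hwi)]
    · have hclosed : W - w < x := by linarith [not_le.1 hfit]
      nlinarith [ih hsort hw hh hle hhi hwi, mul_le_mul_of_nonneg_right hclosed.le hhi]

theorem nextFit_x_bounds {L : List ℕ} (hw : ∀ i ∈ L, 0 ≤ wi i ∧ wi i ≤ W) {x : ℝ} (hx : 0 ≤ x)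
    (y s : ℝ) : ∀ p ∈ nextFit wi hi W L x y s, 0 ≤ p.x ∧ p.x + wi p.item ≤ W := by
  induction L generalizing x y s with
  | nil => simp [nextFit]
  | cons i t ih =>
    obtain ⟨⟨hwi, hwi_le⟩, hw⟩ := List.forall_mem_cons.1 hw
    simp only [nextFit]
    split_ifs with hfit
    · exact List.forall_mem_cons.2 ⟨⟨hx, hfit⟩, ih hw (add_nonneg hx hwi) y s⟩
    · exact List.forall_mem_cons.2 ⟨⟨le_rfl, by simpa using hwi_le⟩, ih hw hwi _ _⟩

theorem nextFit_y_bounds {L : List ℕ} (hsort : L.Pairwise fun a b => hi b ≤ hi a)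
    (hh : ∀ i ∈ L, 0 ≤ hi i) {s : ℝ} (hhs : ∀ i ∈ L, hi i ≤ s) (x y : ℝ) :
    ∀ p ∈ nextFit wi hi W L x y s,
      y ≤ p.y ∧ p.y + hi p.item ≤ y + s + openedHeight wi hi W L x := by
  induction L generalizing x y s with
  | nil => simp [nextFit]
  | cons i t ih =>
    obtain ⟨hhi, hh⟩ := List.forall_mem_cons.1 hh
    obtain ⟨hle, hsort⟩ := List.pairwise_cons.1 hsort
    have his := hhs i List.mem_cons_self
    have hrest := fun x => openedHeight_nonneg (wi := wi) (W := W) hh x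
    simp only [nextFit, openedHeight]
    split_ifs with hfit
    · refine List.forall_mem_cons.2 ⟨⟨le_rfl, by linarith [hrest (x + wi i)]⟩, fun p hp => ?_⟩
      exact ih hsort hh (fun j hj => hhs j (List.mem_cons_of_mem _ hj)) _ _ p hp
    · refine List.forall_mem_cons.2 ⟨⟨by linarith, by linarith [hrest (wi i)]⟩, fun p hp => ?_⟩
      have := ih hsort hh hle (wi i) (y + s) p hp
      constructor <;> linarith

theorem nextFit_right_or_above {L : List ℕ} (hw : ∀ i ∈ L, 0 ≤ wi i) (hh : ∀ i ∈ L, 0 ≤ hi i)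
    (x y s : ℝ) : ∀ p ∈ nextFit wi hi W L x y s, (x ≤ p.x ∧ p.y = y) ∨ y + s ≤ p.y := by
  induction L generalizing x y s with
  | nil => simp [nextFit]
  | cons i t ih =>
    obtain ⟨hwi, hw⟩ := List.forall_mem_cons.1 hw
    obtain ⟨hhi, hh⟩ := List.forall_mem_cons.1 hh
    simp only [nextFit]
    split_ifs with hfit
    · refine List.forall_mem_cons.2 ⟨Or.inl ⟨le_rfl, rfl⟩, fun p hp => ?_⟩
      rcases ih hw hh (x + wi i) y s p hp with ⟨hpx, hpy⟩ | hp
      · exact Or.inl ⟨by linarith, hpy⟩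
      · exact Or.inr hp
    · refine List.forall_mem_cons.2 ⟨Or.inr le_rfl, fun p hp => Or.inr ?_⟩
      rcases ih hw hh (wi i) (y + s) (hi i) p hp with ⟨-, hpy⟩ | hp
      · exact hpy.ge
      · linarith

theorem pairwise_separated_nextFit {L : List ℕ} (hsort : L.Pairwise fun a b => hi b ≤ hi a)
    (hw : ∀ i ∈ L, 0 ≤ wi i) (hh : ∀ i ∈ L, 0 ≤ hi i) {s : ℝ} (hhs : ∀ i ∈ L, hi i ≤ s)
    (x y : ℝ) : (nextFit wi hi W L x y s).Pairwise (Separated wi hi) := by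
  induction L generalizing x y s with
  | nil => simp [nextFit]
  | cons i t ih =>
    obtain ⟨hle, hsort'⟩ := List.pairwise_cons.1 hsort
    have hw' := fun j hj => hw j (List.mem_cons_of_mem i hj)
    have hh' := fun j hj => hh j (List.mem_cons_of_mem i hj)
    simp only [nextFit]
    split_ifs with hfit
    · refine List.pairwise_cons.2
        ⟨fun q hq => ?_, ih hsort' hw' hh' (fun j hj => hhs j (List.mem_cons_of_mem i hj)) _ _⟩
      rcases nextFit_right_or_above hw' hh' _ _ _ q hq with ⟨hqx, -⟩ | hqy
      · exact Or.inl hqx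
      · exact Or.inr (by linarith [hhs i List.mem_cons_self])
    · refine List.pairwise_cons.2 ⟨fun q hq => ?_, ih hsort' hw' hh' hle _ _⟩
      rcases nextFit_right_or_above hw' hh' _ _ _ q hq with ⟨hqx, -⟩ | hqy
      · exact Or.inl (by simpa using hqx)
      · exact Or.inr hqy

theorem map_item_nfdh (L : List ℕ) : (nfdh wi hi W L).map Placement.item = L := by
  cases L with
  | nil => rfl
  | cons i t => exact map_item_nextFit _ _ _ _

theorem nfdh_mem_bin {w h H : ℝ} (hwW : w < W) {L : List ℕ}
    (hsort : L.Pairwise fun a b => hi b ≤ hi a) (hw : ∀ i ∈ L, 0 ≤ wi i ∧ wi i ≤ w)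
    (hh : ∀ i ∈ L, 0 ≤ hi i ∧ hi i ≤ h)
    (harea : (L.map fun i => wi i * hi i).sum ≤ (W - w) * (H - h)) :
    ∀ p ∈ nfdh wi hi W L, 0 ≤ p.x ∧ p.x + wi p.item ≤ W ∧ 0 ≤ p.y ∧ p.y + hi p.item ≤ H := by
  cases L with
  | nil => simp [nfdh]
  | cons i t =>
    have hfirst : ∀ j ∈ i :: t, hi j ≤ hi i :=
      List.forall_mem_cons.2 ⟨le_rfl, (List.pairwise_cons.1 hsort).1⟩
    have hopened : openedHeight wi hi W (i :: t) 0 ≤ H - h := by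
      refine le_of_mul_le_mul_left ?_ (sub_pos.2 hwW)
      linarith [mul_openedHeight_le (W := W) hsort hw (fun j hj => (hh j hj).1) hfirst
        (hh i List.mem_cons_self).1 le_rfl]
    intro p hp
    obtain ⟨hx0, hxW⟩ := nextFit_x_bounds
      (fun j hj => ⟨(hw j hj).1, (hw j hj).2.trans hwW.le⟩) le_rfl 0 (hi i) p hp
    obtain ⟨hy0, hyH⟩ := nextFit_y_bounds hsort (fun j hj => (hh j hj).1) hfirst 0 0 p hp
    exact ⟨hx0, hxW, hy0, by linarith [(hh i List.mem_cons_self).2]⟩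

theorem pairwise_separated_nfdh {L : List ℕ} (hsort : L.Pairwise fun a b => hi b ≤ hi a)
    (hw : ∀ i ∈ L, 0 ≤ wi i) (hh : ∀ i ∈ L, 0 ≤ hi i) :
    (nfdh wi hi W L).Pairwise (Separated wi hi) := by
  cases L with
  | nil => exact List.Pairwise.nil
  | cons i t =>
    exact pairwise_separated_nextFit hsort hw hh
      (List.forall_mem_cons.2 ⟨le_rfl, (List.pairwise_cons.1 hsort).1⟩) 0 0

theorem not_overlap_of_separated {p q : Placement}
    (hpq : Separated wi hi p q ∨ Separated wi hi q p) (px py : ℝ) :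
    ¬(p.x < px ∧ px < p.x + wi p.item ∧ p.y < py ∧ py < p.y + hi p.item ∧
      q.x < px ∧ px < q.x + wi q.item ∧ q.y < py ∧ py < q.y + hi q.item) := by
  rintro ⟨hpx, hpx', hpy, hpy', hqx, hqx', hqy, hqy'⟩
  rcases hpq with (h | h) | (h | h) <;> linarith

end NFDH

theorem stmt18_general (W H w h : ℝ) (hwW : w < W)
    (S : Finset ℕ) (wi hi : ℕ → ℝ)
    (hdim : ∀ i ∈ S, 0 < wi i ∧ wi i ≤ w ∧ 0 < hi i ∧ hi i ≤ h)
    (harea : ∑ i ∈ S, wi i * hi i ≤ (W - w) * (H - h)) :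
    ∃ x y : ℕ → ℝ,
      (∀ i ∈ S, 0 ≤ x i ∧ x i + wi i ≤ W ∧ 0 ≤ y i ∧ y i + hi i ≤ H) ∧
      (∀ i ∈ S, ∀ j ∈ S, i ≠ j → ∀ px py : ℝ,
        ¬(x i < px ∧ px < x i + wi i ∧ y i < py ∧ py < y i + hi i ∧
          x j < px ∧ px < x j + wi j ∧ y j < py ∧ py < y j + hi j)) := by
  obtain ⟨L, hLS, hsort⟩ := List.exists_perm_pairwise_antitone hi S.toList
  have hmem : ∀ i, i ∈ L ↔ i ∈ S := fun i => by rw [hLS.mem_iff, Finset.mem_toList]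
  have hw : ∀ i ∈ L, 0 ≤ wi i ∧ wi i ≤ w := fun i hiL =>
    have := hdim i ((hmem i).1 hiL); ⟨this.1.le, this.2.1⟩
  have hh : ∀ i ∈ L, 0 ≤ hi i ∧ hi i ≤ h := fun i hiL =>
    have := hdim i ((hmem i).1 hiL); ⟨this.2.2.1.le, this.2.2.2⟩
  have hareaL : (L.map fun i => wi i * hi i).sum ≤ (W - w) * (H - h) := by
    rwa [(hLS.map _).sum_eq, Finset.sum_map_toList]
  have hplaced : ∀ i ∈ S, ∃ p ∈ NFDH.nfdh wi hi W L, p.item = i := fun i hiS =>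
    List.mem_map.1 (by rw [NFDH.map_item_nfdh]; exact (hmem i).2 hiS)
  have : Nonempty NFDH.Placement := ⟨⟨0, 0, 0⟩⟩
  choose! pos hpos hitem using hplaced
  refine ⟨fun i => (pos i).x, fun i => (pos i).y, fun i hiS => ?_, fun i hiS j hjS hij => ?_⟩
  · simpa [hitem i hiS] using NFDH.nfdh_mem_bin hwW hsort hw hh hareaL _ (hpos i hiS)
  · have hsep := (NFDH.pairwise_separated_nfdh (W := W) hsort (fun k hk => (hw k hk).1)
      (fun k hk => (hh k hk).1)).rel_or_rel_of_ne (hpos i hiS) (hpos j hjS)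
      fun heq => hij (by rw [← hitem i hiS, ← hitem j hjS, heq])
    simpa only [hitem i hiS, hitem j hjS] using NFDH.not_overlap_of_separated hsep

/-- NFDH packing guarantee: if all rectangles have width ≤ w < W, height ≤ h < H and total
area at most (W-w)(H-h), then they can all be packed interior-disjointly into a W×H bin. -/
theorem stmt18 (W H w h : ℝ) (hW : 0 < W) (hH : 0 < H)
    (hwW : w < W) (hhH : h < H)
    (S : Finset ℕ) (wi hi : ℕ → ℝ)
    (hdim : ∀ i ∈ S, 0 < wi i ∧ wi i ≤ w ∧ 0 < hi i ∧ hi i ≤ h)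
    (harea : ∑ i ∈ S, wi i * hi i ≤ (W - w) * (H - h)) :
    ∃ x y : ℕ → ℝ,
      (∀ i ∈ S, 0 ≤ x i ∧ x i + wi i ≤ W ∧ 0 ≤ y i ∧ y i + hi i ≤ H) ∧
      (∀ i ∈ S, ∀ j ∈ S, i ≠ j → ∀ px py : ℝ,
        ¬(x i < px ∧ px < x i + wi i ∧ y i < py ∧ py < y i + hi i ∧
          x j < px ∧ px < x j + wi j ∧ y j < py ∧ py < y j + hi j)) :=
  stmt18_general W H w h hwW S wi hi hdim harea
end
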